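/- Let G be a finite group and π_k (k = 1, 2, ...) a sequence of finite-dimensional complex representations of G. Let S be the set of irreducible representations of G, and suppose that for some constant c ≥ 0: (i) for every ρ ∈ S, liminf_{k→∞} ⟨ρ, π_k⟩/k ≥ c·dim(ρ), and (ii) lim_{k→∞} (dim π_k)/k = c·∑_{ρ∈S} (dim ρ)². Then for every ρ ∈ S, lim_{k→∞} ⟨ρ, π_k⟩/k = c·dim(ρ). -/

import Mathlib

/-!
By Maschke's theorem and Schur's lemma, `dim π_k = ∑_ρ dim ρ · ⟨ρ, π_k⟩`. After dividing by `k`,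
the left side tends to `∑_ρ dim ρ · c dim ρ`, which is the same weighted sum of the lower bounds
for the normalized multiplicities. As all weights `dim ρ` are positive, no normalized
multiplicity can exceed its lower bound by a fixed amount infinitely often, so each converges.
-/

open Module Filter Topology

/-- The submodule of `G`-equivariant linear maps between two representations. -/
def eqHoms {G : Type*} [Group G] {V W : Type*} [AddCommGroup V] [Module ℂ V]
    [AddCommGroup W] [Module ℂ W]
    (ρ : Representation ℂ G V) (π : Representation ℂ G W) : Submodule ℂ (V →ₗ[ℂ] W) where
  carrier := {f | ∀ g, f ∘ₗ ρ g = π g ∘ₗ f}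
  add_mem' := by
    intro f h hf hh g
    ext v
    have h1 := LinearMap.congr_fun (hf g) v
    have h2 := LinearMap.congr_fun (hh g) v
    simp only [LinearMap.comp_apply] at h1 h2 ⊢
    simp [h1, h2]
  zero_mem' := by intro g; ext v; simp
  smul_mem' := by
    intro c f hf g
    ext v
    have h1 := LinearMap.congr_fun (hf g) v
    simp only [LinearMap.comp_apply] at h1 ⊢
    simp [h1]

/-- The multiplicity of the irreducible representation `ρ` in `π`, i.e. the dimension of the
space of `G`-equivariant linear maps from `ρ` to `π`. -/
noncomputable def multRep {G : Type*} [Group G] {V W : Type*} [AddCommGroup V] [Module ℂ V]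
    [AddCommGroup W] [Module ℂ W]
    (ρ : Representation ℂ G V) (π : Representation ℂ G W) : ℕ :=
  Module.finrank ℂ (eqHoms ρ π)

/-- A representation is irreducible if the space is nonzero and the only invariant submodules
are `⊥` and `⊤`. -/
def RepIsIrreducible {G : Type*} [Group G] {V : Type*} [AddCommGroup V] [Module ℂ V]
    (ρ : Representation ℂ G V) : Prop :=
  Nontrivial V ∧ ∀ U : Submodule ℂ V, (∀ g, ∀ x ∈ U, ρ g x ∈ U) → U = ⊥ ∨ U = ⊤

/-- Two representations are isomorphic. -/
def RepIso {G : Type*} [Group G] {V W : Type*} [AddCommGroup V] [Module ℂ V]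
    [AddCommGroup W] [Module ℂ W]
    (ρ : Representation ℂ G V) (π : Representation ℂ G W) : Prop :=
  ∃ e : V ≃ₗ[ℂ] W, ∀ g v, e (ρ g v) = π g (e v)

section Multiplicity

variable {G : Type*} [Group G] {V W : Type*} [AddCommGroup V] [Module ℂ V]
  [AddCommGroup W] [Module ℂ W] {ρ : Representation ℂ G V} {π : Representation ℂ G W}

def eqHomsEquivIntertwiningMap (ρ : Representation ℂ G V) (π : Representation ℂ G W) :
    eqHoms ρ π ≃ₗ[ℂ] ρ.IntertwiningMap π where
  toFun f := ⟨f.1, f.2⟩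
  invFun f := ⟨f.toLinearMap, f.isIntertwining'⟩
  map_add' _ _ := rfl
  map_smul' _ _ := rfl

lemma multRep_eq_finrank_intertwiningMap (ρ : Representation ℂ G V)
    (π : Representation ℂ G W) : multRep ρ π = finrank ℂ (ρ.IntertwiningMap π) :=
  (eqHomsEquivIntertwiningMap ρ π).finrank_eq

lemma repIso_iff_nonempty_equiv : RepIso ρ π ↔ Nonempty (ρ.Equiv π) :=
  ⟨fun ⟨e, he⟩ => ⟨.mk e fun g => LinearMap.ext (he g)⟩,
    fun ⟨e⟩ => ⟨e.toLinearEquiv, e.isIntertwining⟩⟩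

lemma RepIso.refl (ρ : Representation ℂ G V) : RepIso ρ ρ :=
  ⟨LinearEquiv.refl ℂ V, fun _ _ => rfl⟩

lemma RepIso.finrank_eq (h : RepIso ρ π) : finrank ℂ V = finrank ℂ W :=
  h.choose.finrank_eq

lemma RepIsIrreducible.isIrreducible (hρ : RepIsIrreducible ρ) : ρ.IsIrreducible where
  exists_pair_ne := ⟨⊥, ⊤, fun h => by
    have := hρ.1
    exact bot_ne_top (congrArg Subrepresentation.toSubmodule h)⟩
  eq_bot_or_eq_top U :=
    (hρ.2 U.toSubmodule fun g _ hx => U.apply_mem_toSubmodule g hx).imp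
      Subrepresentation.ext Subrepresentation.ext

lemma multRep_congr_right {W' : Type*} [AddCommGroup W'] [Module ℂ W']
    {π' : Representation ℂ G W'} (ρ : Representation ℂ G V) (h : RepIso π π') :
    multRep ρ π = multRep ρ π' := by
  obtain ⟨e⟩ := repIso_iff_nonempty_equiv.1 h
  simp only [multRep_eq_finrank_intertwiningMap]
  refine LinearEquiv.finrank_eq (.ofLinearMap
    (Representation.IntertwiningMap.llcomp ρ π π' e.toIntertwiningMap)
    (Representation.IntertwiningMap.llcomp ρ π' π e.symm.toIntertwiningMap) ?_ ?_) <;>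
  · ext; simp [Representation.IntertwiningMap.llcomp]

lemma multRep_self [FiniteDimensional ℂ V] (hρ : RepIsIrreducible ρ) : multRep ρ ρ = 1 := by
  have := hρ.isIrreducible
  rw [multRep_eq_finrank_intertwiningMap]
  exact Representation.IsIrreducible.finrank_intertwiningMap_self ρ

lemma multRep_eq_zero_of_not_repIso (hρ : RepIsIrreducible ρ) (hπ : RepIsIrreducible π)
    (h : ¬RepIso ρ π) : multRep ρ π = 0 := by
  have := hρ.isIrreducible
  have := hπ.isIrreducible
  have : IsEmpty (ρ.Equiv π) := not_nonempty_iff.1 (repIso_iff_nonempty_equiv.not.1 h)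
  rw [multRep_eq_finrank_intertwiningMap]
  exact finrank_zero_of_subsingleton

lemma multRep_eq_zero_of_subsingleton [Subsingleton W] (ρ : Representation ℂ G V)
    (π : Representation ℂ G W) : multRep ρ π = 0 :=
  finrank_zero_of_subsingleton

end Multiplicity

section Decomposition

variable {G : Type*} [Group G] {V W : Type*} [AddCommGroup V] [Module ℂ V]
  [AddCommGroup W] [Module ℂ W] {π : Representation ℂ G W}

lemma Subrepresentation.exists_isCompl_toSubmodule [Finite G] (U : Subrepresentation π) :
    ∃ U' : Subrepresentation π, IsCompl U.toSubmodule U'.toSubmodule := by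
  have : ComplementedLattice (Subrepresentation π) :=
    (π.isSemisimpleRepresentation_iff_isSemisimpleModule_asModule).2 inferInstance
  obtain ⟨U', hU'⟩ := exists_isCompl U
  refine ⟨U', isCompl_iff.2 ⟨disjoint_iff.2 ?_, codisjoint_iff.2 ?_⟩⟩
  · rw [← Subrepresentation.toSubmodule_inf, hU'.inf_eq_bot]; rfl
  · rw [← Subrepresentation.toSubmodule_sup, hU'.sup_eq_top]; rfl

lemma Subrepresentation.repIso_prod {U U' : Subrepresentation π}
    (h : IsCompl U.toSubmodule U'.toSubmodule) :
    RepIso (U.toRepresentation.prod U'.toRepresentation) π :=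
  ⟨Submodule.prodEquivOfIsCompl _ _ h, fun g x => by simp [Subrepresentation.toRepresentation]⟩

lemma multRep_prod {W' : Type*} [AddCommGroup W'] [Module ℂ W'] [FiniteDimensional ℂ V]
    [FiniteDimensional ℂ W] [FiniteDimensional ℂ W'] (ρ : Representation ℂ G V)
    (σ : Representation ℂ G W) (τ : Representation ℂ G W') :
    multRep ρ (σ.prod τ) = multRep ρ σ + multRep ρ τ := by
  open Representation.IntertwiningMap in
  simp only [multRep_eq_finrank_intertwiningMap]
  refine (LinearEquiv.finrank_eq (.ofLinearMap
    ((llcomp ρ _ _ (fst ℂ σ τ)).prod (llcomp ρ _ _ (snd ℂ σ τ)))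
    ((llcomp ρ _ _ (inl ℂ σ τ)).coprod (llcomp ρ _ _ (inr ℂ σ τ))) ?_ ?_)).trans
      (finrank_prod ..)
  · ext <;> simp [llcomp, inl, inr, prod]
  · ext <;> simp [llcomp, inl, inr, prod]

lemma multRep_eq_add_of_isCompl [FiniteDimensional ℂ V] [FiniteDimensional ℂ W]
    (ρ : Representation ℂ G V) {U U' : Subrepresentation π}
    (h : IsCompl U.toSubmodule U'.toSubmodule) :
    multRep ρ π = multRep ρ U.toRepresentation + multRep ρ U'.toRepresentation := by
  rw [← multRep_congr_right ρ (Subrepresentation.repIso_prod h), multRep_prod]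

end Decomposition

section Counting

variable {G : Type*} [Group G] {ι : Type*} {Vι : ι → Type}
  [∀ i, AddCommGroup (Vι i)] [∀ i, Module ℂ (Vι i)] [∀ i, FiniteDimensional ℂ (Vι i)]
  {S : ∀ i, Representation ℂ G (Vι i)}

lemma exists_subrepresentation_ne_bot_ne_top {W : Type*} [AddCommGroup W] [Module ℂ W]
    [Nontrivial W] {π : Representation ℂ G W} (hπ : ¬RepIsIrreducible π) :
    ∃ U : Subrepresentation π, U.toSubmodule ≠ ⊥ ∧ U.toSubmodule ≠ ⊤ := by
  simp only [RepIsIrreducible, not_and, not_forall, not_or] at hπ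
  obtain ⟨U, hU, hbot, htop⟩ := hπ ‹_›
  exact ⟨⟨U, fun g _ hx => hU g _ hx⟩, hbot, htop⟩

lemma multRep_eq_ite_of_repIso [DecidableEq ι] (hirr : ∀ i, RepIsIrreducible (S i))
    (hdistinct : ∀ i j, RepIso (S i) (S j) → i = j)
    {W : Type*} [AddCommGroup W] [Module ℂ W] {π : Representation ℂ G W} {j : ι}
    (hj : RepIso π (S j)) (i : ι) : multRep (S i) π = if i = j then 1 else 0 := by
  rw [multRep_congr_right (S i) hj]
  split_ifs with hij
  · subst hij
    exact multRep_self (hirr i)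
  · exact multRep_eq_zero_of_not_repIso (hirr i) (hirr j) (mt (hdistinct i j) hij)

theorem finrank_eq_sum_finrank_mul_multRep [Finite G] [Fintype ι]
    (hirr : ∀ i, RepIsIrreducible (S i))
    (hcomplete : ∀ {V : Type} [AddCommGroup V] [Module ℂ V] [FiniteDimensional ℂ V]
      (ρ : Representation ℂ G V), RepIsIrreducible ρ → ∃! i : ι, RepIso ρ (S i))
    {W : Type} [AddCommGroup W] [Module ℂ W] [FiniteDimensional ℂ W]
    (π : Representation ℂ G W) :
    finrank ℂ W = ∑ i, finrank ℂ (Vι i) * multRep (S i) π := by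
  classical
  induction hn : finrank ℂ W using Nat.strong_induction_on generalizing W with
  | _ n ih =>
  subst hn
  rcases subsingleton_or_nontrivial W with hW | hW
  · simp [multRep_eq_zero_of_subsingleton, finrank_zero_of_subsingleton]
  by_cases hπ : RepIsIrreducible π
  · obtain ⟨j, hj, -⟩ := hcomplete π hπ
    have hdistinct : ∀ i j, RepIso (S i) (S j) → i = j := fun i _ h =>
      (hcomplete (S i) (hirr i)).unique (RepIso.refl _) h
    simp [multRep_eq_ite_of_repIso hirr hdistinct hj, hj.finrank_eq]
  obtain ⟨U, hbot, htop⟩ := exists_subrepresentation_ne_bot_ne_top hπ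
  obtain ⟨U', hUU'⟩ := U.exists_isCompl_toSubmodule
  have hU'top : U'.toSubmodule ≠ ⊤ := fun h => hbot (eq_bot_of_isCompl_top (h ▸ hUU'))
  rw [← Submodule.finrank_add_eq_of_isCompl hUU',
    ih _ (Submodule.finrank_lt htop) U.toRepresentation rfl,
    ih _ (Submodule.finrank_lt hU'top) U'.toRepresentation rfl, ← Finset.sum_add_distrib]
  simp only [multRep_eq_add_of_isCompl _ hUU', mul_add]

end Counting

lemma tendsto_of_le_liminf_of_tendsto_sum {α ι : Type*} [Fintype ι] {l : Filter α}
    {x : ι → α → ℝ} {a w : ι → ℝ} (hw : ∀ j, 0 ≤ w j)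
    (hbdd : ∀ j, IsBoundedUnder (· ≥ ·) l (x j)) (hlim : ∀ j, a j ≤ liminf (x j) l)
    (hsum : Tendsto (fun t => ∑ j, w j * x j t) l (𝓝 (∑ j, w j * a j)))
    {i : ι} (hi : 0 < w i) : Tendsto (x i) l (𝓝 (a i)) := by
  have hneg : ∀ j, Tendsto (fun t => min (x j t - a j) 0) l (𝓝 0) := fun j => by
    refine tendsto_order.2
      ⟨fun b hb => ?_, fun b hb => .of_forall fun t => (min_le_right _ _).trans_lt hb⟩
    filter_upwards [eventually_lt_of_lt_liminf (by linarith [hlim j] : a j + b < _) (hbdd j)]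
      with t ht
    exact lt_min (by linarith) hb
  -- The negative parts of `x j - a j` vanish in the limit, so the weighted sum of the positive
  -- parts tends to `0`, and so does each of its nonnegative terms.
  have hpos : Tendsto (fun t => ∑ j, w j * max (x j t - a j) 0) l (𝓝 0) := by
    have := (hsum.sub_const (∑ j, w j * a j)).sub
      (tendsto_finsetSum Finset.univ fun j _ => (hneg j).const_mul (w j))
    simp only [sub_self, mul_zero, Finset.sum_const_zero] at this
    refine this.congr fun t => ?_
    simp only [← Finset.sum_sub_distrib, ← mul_sub]
    refine Finset.sum_congr rfl fun j _ => congrArg (w j * ·) ?_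
    linarith [min_add_max (x j t - a j) 0]
  have hposi : Tendsto (fun t => max (x i t - a i) 0) l (𝓝 0) := by
    have := tendsto_of_tendsto_of_tendsto_of_le_of_le tendsto_const_nhds hpos
      (fun t => mul_nonneg hi.le (le_max_right _ _)) fun t =>
        Finset.single_le_sum (f := fun j => w j * max (x j t - a j) 0)
          (fun j _ => mul_nonneg (hw j) (le_max_right _ _)) (Finset.mem_univ i)
    simpa [hi.ne'] using this.const_mul (w i)⁻¹
  simpa using ((hneg i).add hposi).const_add (a i) |>.congr fun t => by
    linarith [min_add_max (x i t - a i) 0]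

theorem stmt_4_general (G : Type) [Group G] [Fintype G]
    {ι : Type} [Fintype ι] {Vι : ι → Type}
    [∀ i, AddCommGroup (Vι i)] [∀ i, Module ℂ (Vι i)] [∀ i, FiniteDimensional ℂ (Vι i)]
    (S : ∀ i, Representation ℂ G (Vι i)) (hirr : ∀ i, RepIsIrreducible (S i))
    (hcomplete : ∀ {V : Type} [AddCommGroup V] [Module ℂ V] [FiniteDimensional ℂ V]
      (ρ : Representation ℂ G V), RepIsIrreducible ρ → ∃! i : ι, RepIso ρ (S i))
    {Wk : ℕ → Type} [∀ k, AddCommGroup (Wk k)] [∀ k, Module ℂ (Wk k)]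
    [∀ k, FiniteDimensional ℂ (Wk k)]
    (π : ∀ k, Representation ℂ G (Wk k)) (c : ℝ)
    (h1 : ∀ i, c * (finrank ℂ (Vι i) : ℝ) ≤
      Filter.liminf (fun k : ℕ => (multRep (S i) (π k) : ℝ) / k) Filter.atTop)
    (h2 : Filter.Tendsto (fun k : ℕ => (finrank ℂ (Wk k) : ℝ) / k) Filter.atTop
      (nhds (c * ∑ i, ((finrank ℂ (Vι i) : ℝ)) ^ 2))) :
    ∀ i, Filter.Tendsto (fun k : ℕ => (multRep (S i) (π k) : ℝ) / k) Filter.atTop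
      (nhds (c * (finrank ℂ (Vι i) : ℝ))) := by
  intro i
  have hdim : ∀ j, 0 < (finrank ℂ (Vι j) : ℝ) := fun j => by
    have := (hirr j).1
    exact_mod_cast finrank_pos
  refine tendsto_of_le_liminf_of_tendsto_sum (fun j => (hdim j).le)
    (fun j => isBoundedUnder_of_eventually_ge (.of_forall fun k => by positivity)) h1 ?_ (hdim i)
  convert h2 using 2 with k
  · rw [finrank_eq_sum_finrank_mul_multRep hirr hcomplete (π k)]
    push_cast
    rw [Finset.sum_div]
    exact Finset.sum_congr rfl fun j _ => (mul_div_assoc _ _ _).symm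
  · rw [Finset.mul_sum]
    exact Finset.sum_congr rfl fun j _ => by ring

/-- if `S i` is a complete family of pairwise non-isomorphic irreducible
representations of the finite group `G`, `π k` a sequence of finite-dimensional
representations, `c ≥ 0`, `liminf ⟨S i, π k⟩/k ≥ c·dim(S i)` for each `i`, and
`dim(π k)/k → c·∑ᵢ dim(S i)²`, then `⟨S i, π k⟩/k → c·dim(S i)` for every `i`. -/
theorem stmt_4 (G : Type) [Group G] [Fintype G]
    {ι : Type} [Fintype ι] {Vι : ι → Type}
    [∀ i, AddCommGroup (Vι i)] [∀ i, Module ℂ (Vι i)] [∀ i, FiniteDimensional ℂ (Vι i)]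
    (S : ∀ i, Representation ℂ G (Vι i)) (hirr : ∀ i, RepIsIrreducible (S i))
    (hcomplete : ∀ {V : Type} [AddCommGroup V] [Module ℂ V] [FiniteDimensional ℂ V]
      (ρ : Representation ℂ G V), RepIsIrreducible ρ → ∃! i : ι, RepIso ρ (S i))
    {Wk : ℕ → Type} [∀ k, AddCommGroup (Wk k)] [∀ k, Module ℂ (Wk k)]
    [∀ k, FiniteDimensional ℂ (Wk k)]
    (π : ∀ k, Representation ℂ G (Wk k)) (c : ℝ) (hc : 0 ≤ c)
    (h1 : ∀ i, c * (finrank ℂ (Vι i) : ℝ) ≤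
      Filter.liminf (fun k : ℕ => (multRep (S i) (π k) : ℝ) / k) Filter.atTop)
    (h2 : Filter.Tendsto (fun k : ℕ => (finrank ℂ (Wk k) : ℝ) / k) Filter.atTop
      (nhds (c * ∑ i, ((finrank ℂ (Vι i) : ℝ)) ^ 2))) :
    ∀ i, Filter.Tendsto (fun k : ℕ => (multRep (S i) (π k) : ℝ) / k) Filter.atTop
      (nhds (c * (finrank ℂ (Vι i) : ℝ))) :=
  stmt_4_general G S hirr hcomplete π c h1 h2
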